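/- Let (S, A) be a weakly ergodic average scheme on a norming dual pair (X,Y). Then the operator P defined by Px := σ-lim_α A_α x belongs to L(X,σ) (it is bounded and its norm adjoint leaves Y invariant), its σ-adjoint P' satisfies P'y = σ'-lim_α A'_α y for all y ∈ Y, P is the projection onto fix(S) along span‾^σ rg(I−S), P' is the projection onto fix(S') along span‾^{σ'} rg(I−S'), and PS = SP = P for all S ∈ S. -/

import Mathlib

open Filter Topology Set

noncomputable section

/-- A norming dual pair `(X, Y, ⟨·,·⟩)`: Banach spaces `X`, `Y` with a bilinear duality
such that each norm is recovered as a supremum of pairings against the unit ball. -/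
structure NormingDualPair (X Y : Type*) [NormedAddCommGroup X] [NormedSpace ℝ X]
    [NormedAddCommGroup Y] [NormedSpace ℝ Y] : Type _ where
  p : X →ₗ[ℝ] Y →ₗ[ℝ] ℝ
  norm_eq_left : ∀ x : X, ‖x‖ = ⨆ y : {y : Y // ‖y‖ ≤ 1}, |p x y.1|
  norm_eq_right : ∀ y : Y, ‖y‖ = ⨆ x : {x : X // ‖x‖ ≤ 1}, |p x.1 y|

variable {X Y : Type*} [NormedAddCommGroup X] [NormedSpace ℝ X]
  [NormedAddCommGroup Y] [NormedSpace ℝ Y]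

/-- The weak topology `σ(X,Y)` on `X` induced by the pairing. -/
def NormingDualPair.sigma (ndp : NormingDualPair X Y) : TopologicalSpace X :=
  TopologicalSpace.induced (fun x => fun y : Y => ndp.p x y) Pi.topologicalSpace

/-- The weak topology `σ(Y,X)` on `Y` induced by the pairing. -/
def NormingDualPair.sigma' (ndp : NormingDualPair X Y) : TopologicalSpace Y :=
  TopologicalSpace.induced (fun y => fun x : X => ndp.p x y) Pi.topologicalSpace

/-- The fixed space `fix(𝒮) = ⋂_{S ∈ 𝒮} ker (I - S)`. -/
def fixedSpace (S : Set (X →L[ℝ] X)) : Set X := {x | ∀ s ∈ S, s x = x}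

/-- The range `rg(I - 𝒮) = {x - Sx : x ∈ X, S ∈ 𝒮}`. -/
def rangeIminus (S : Set (X →L[ℝ] X)) : Set X := {z | ∃ x : X, ∃ s ∈ S, z = x - s x}

/-- An average scheme `(𝒮, (A_α)_{α ∈ ι})` on a norming dual pair `(X,Y)`:
a semigroup `𝒮 ⊆ L(X,σ)` (σ-continuity encoded via the existence of adjoints on `Y`)
and a net of σ-continuous operators satisfying (AS1)-(AS3). -/
structure AverageScheme (ndp : NormingDualPair X Y) (ι : Type*) [Preorder ι] : Type _ where
  S : Set (X →L[ℝ] X)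
  adj : (X →L[ℝ] X) → (Y →L[ℝ] Y)
  one_mem : (1 : X →L[ℝ] X) ∈ S
  comp_mem : ∀ s ∈ S, ∀ t ∈ S, s.comp t ∈ S
  adj_spec : ∀ s ∈ S, ∀ (x : X) (y : Y), ndp.p (s x) y = ndp.p x (adj s y)
  A : ι → (X →L[ℝ] X)
  A' : ι → (Y →L[ℝ] Y)
  A'_spec : ∀ (α : ι) (x : X) (y : Y), ndp.p (A α x) y = ndp.p x (A' α y)
  normBound : ∃ M : ℝ, ∀ α : ι, ‖A α‖ ≤ M
  as2 : ∀ (α : ι) (x : X),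
    A α x ∈ @closure X ndp.sigma (convexHull ℝ {z | ∃ s ∈ S, z = s x})
  as2' : ∀ (α : ι) (y : Y),
    A' α y ∈ @closure Y ndp.sigma' (convexHull ℝ {z | ∃ s ∈ S, z = adj s y})
  as3_left : ∀ s ∈ S, ∀ x : X, Tendsto (fun α : ι => A α (s x - x)) atTop (nhds 0)
  as3_right : ∀ s ∈ S, ∀ x : X, Tendsto (fun α : ι => s (A α x) - A α x) atTop (nhds 0)
  as3'_left : ∀ s ∈ S, ∀ y : Y, Tendsto (fun α : ι => A' α (adj s y - y)) atTop (nhds 0)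
  as3'_right : ∀ s ∈ S, ∀ y : Y, Tendsto (fun α : ι => adj s (A' α y) - A' α y) atTop (nhds 0)

/-- The fixed space of the adjoint semigroup `fix(𝒮')` in `Y`. -/
def AverageScheme.fix' {ι : Type*} [Preorder ι] {ndp : NormingDualPair X Y}
    (AS : AverageScheme ndp ι) : Set Y := {y | ∀ s ∈ AS.S, AS.adj s y = y}

/-- The range `rg(I - 𝒮')` in `Y`. -/
def AverageScheme.rg' {ι : Type*} [Preorder ι] {ndp : NormingDualPair X Y}
    (AS : AverageScheme ndp ι) : Set Y := {z | ∃ y : Y, ∃ s ∈ AS.S, z = y - AS.adj s y}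

/-- A filter (net) clusters in a topology: every finer nontrivial filter (subnet) has a
cluster point (i.e. a convergent subnet). -/
def ClustersIn {Z : Type*} (τ : TopologicalSpace Z) (F : Filter Z) : Prop :=
  ∀ G : Filter Z, G ≤ F → G.NeBot → ∃ z : Z, @ClusterPt Z τ z G

/-- Weak ergodicity: `σ`-convergence of `A_α x` for every `x` and `σ'`-convergence of
`A'_α y` for every `y`. -/
def AverageScheme.WeaklyErgodic {ι : Type*} [Preorder ι] {ndp : NormingDualPair X Y}
    (AS : AverageScheme ndp ι) : Prop :=
  (∀ x : X, ∃ l : X, Tendsto (fun α : ι => AS.A α x) atTop (@nhds X ndp.sigma l)) ∧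
  (∀ y : Y, ∃ l : Y, Tendsto (fun α : ι => AS.A' α y) atTop (@nhds Y ndp.sigma' l))

/-- The fixed space as a submodule. -/
def fixedSubmodule (S : Set (X →L[ℝ] X)) : Submodule ℝ X where
  carrier := {x | ∀ s ∈ S, s x = x}
  add_mem' := by
    intro a b ha hb s hs
    simp only [Set.mem_setOf_eq] at *
    rw [map_add, ha s hs, hb s hs]
  zero_mem' := by
    intro s hs
    simp
  smul_mem' := by
    intro c x hx s hs
    simp only [Set.mem_setOf_eq] at *
    rw [map_smul, hx s hs]

/-!
Bounded nets of operators that converge pointwise in `σ(X,Y)` have a bounded linear limit, so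
`P` and `P'` exist, and they are adjoint to each other because each `A'_α` is adjoint to `A_α`.
Every `s ∈ 𝒮` has an adjoint and is therefore `σ`-continuous, which lets (AS3) pass to the limit:
`s P = P`, and dually `s' P' = P'`. For a fixed `x` the convex hull in (AS2) is `{x}`, so
`A_α x = x`. Finally `⟨P x, y⟩ = ⟨x, P' y⟩` with `P' y ∈ fix(𝒮')`, and `fix(𝒮')` annihilates
`rg(I - 𝒮)`, hence also its `σ`-closed span; this gives `P = 0` there and `P s = P`.
The statements about `Y` are those about `X` for the flipped pairing, whose `σ` is `σ'`.
-/

namespace NormingDualPair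

variable (ndp : NormingDualPair X Y)

def flip : NormingDualPair Y X where
  p := ndp.p.flip
  norm_eq_left := ndp.norm_eq_right
  norm_eq_right := ndp.norm_eq_left

@[simp]
theorem flip_p_apply (y : Y) (x : X) : ndp.flip.p y x = ndp.p x y := rfl

theorem norm_le_of_forall_abs_le {x : X} {C : ℝ} (hC : ∀ y : Y, ‖y‖ ≤ 1 → |ndp.p x y| ≤ C) :
    ‖x‖ ≤ C := by
  have : Nonempty {y : Y // ‖y‖ ≤ 1} := ⟨⟨0, by simp⟩⟩
  rw [ndp.norm_eq_left]
  exact ciSup_le fun y => hC y.1 y.2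

theorem abs_p_le_of_norm_le_one (x : X) {y : Y} (hy : ‖y‖ ≤ 1) : |ndp.p x y| ≤ ‖x‖ := by
  by_cases hb : BddAbove (Set.range fun y : {y : Y // ‖y‖ ≤ 1} => |ndp.p x y.1|)
  · rw [ndp.norm_eq_left x]
    exact le_ciSup hb ⟨y, hy⟩
  · have hx : ‖x‖ = 0 := by rw [ndp.norm_eq_left x, Real.iSup_of_not_bddAbove hb]
    simp [norm_eq_zero.mp hx]

theorem abs_p_le (x : X) (y : Y) : |ndp.p x y| ≤ ‖x‖ * ‖y‖ := by
  rcases eq_or_ne y 0 with rfl | hy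
  · simp
  have hy' : ‖y‖ ≠ 0 := norm_ne_zero_iff.mpr hy
  have h := ndp.abs_p_le_of_norm_le_one x (y := ‖y‖⁻¹ • y) (by simp [norm_smul, hy'])
  rw [map_smul, smul_eq_mul, abs_mul, abs_inv, abs_norm, inv_mul_le_iff₀ (by positivity)] at h
  linarith

theorem ext {x₁ x₂ : X} (h : ∀ y, ndp.p x₁ y = ndp.p x₂ y) : x₁ = x₂ := by
  rw [← sub_eq_zero, ← norm_le_zero_iff]
  exact ndp.norm_le_of_forall_abs_le fun y _ => by simp [h y]

theorem continuous_p_apply (y : Y) : Continuous fun x : X => ndp.p x y :=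
  AddMonoidHomClass.continuous_of_bound (ndp.p.flip y) ‖y‖ fun x => by
    simpa [mul_comm] using ndp.abs_p_le x y

variable {κ : Type*} {l : Filter κ} {u v : κ → X} {a b : X}

theorem tendsto_sigma_iff :
    Tendsto u l (@nhds X ndp.sigma a) ↔
      ∀ y, Tendsto (fun i => ndp.p (u i) y) l (𝓝 (ndp.p a y)) := by
  rw [NormingDualPair.sigma, nhds_induced, tendsto_comap_iff, tendsto_pi_nhds]
  rfl

theorem tendsto_sigma_unique [l.NeBot] (ha : Tendsto u l (@nhds X ndp.sigma a))
    (hb : Tendsto u l (@nhds X ndp.sigma b)) : a = b :=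
  ndp.ext fun y => tendsto_nhds_unique ((ndp.tendsto_sigma_iff.mp ha) y)
    ((ndp.tendsto_sigma_iff.mp hb) y)

theorem tendsto_sigma_of_tendsto (hu : Tendsto u l (𝓝 a)) : Tendsto u l (@nhds X ndp.sigma a) :=
  ndp.tendsto_sigma_iff.mpr fun y => ((ndp.continuous_p_apply y).tendsto a).comp hu

theorem tendsto_sigma_add (hu : Tendsto u l (@nhds X ndp.sigma a))
    (hv : Tendsto v l (@nhds X ndp.sigma b)) :
    Tendsto (fun i => u i + v i) l (@nhds X ndp.sigma (a + b)) :=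
  ndp.tendsto_sigma_iff.mpr fun y => by
    simpa using ((ndp.tendsto_sigma_iff.mp hu) y).add ((ndp.tendsto_sigma_iff.mp hv) y)

theorem tendsto_sigma_const_smul (c : ℝ) (hu : Tendsto u l (@nhds X ndp.sigma a)) :
    Tendsto (fun i => c • u i) l (@nhds X ndp.sigma (c • a)) :=
  ndp.tendsto_sigma_iff.mpr fun y => by
    simpa using ((ndp.tendsto_sigma_iff.mp hu) y).const_mul c

theorem tendsto_sigma_map {s : X → X} {t : Y → Y} (hst : ∀ x y, ndp.p (s x) y = ndp.p x (t y))
    (hu : Tendsto u l (@nhds X ndp.sigma a)) :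
    Tendsto (fun i => s (u i)) l (@nhds X ndp.sigma (s a)) :=
  ndp.tendsto_sigma_iff.mpr fun y => by
    simpa only [hst] using (ndp.tendsto_sigma_iff.mp hu) (t y)

theorem apply_eq_of_tendsto_sub [l.NeBot] {s : X → X} {t : Y → Y}
    (hst : ∀ x y, ndp.p (s x) y = ndp.p x (t y)) (hu : Tendsto u l (@nhds X ndp.sigma a))
    (hs : Tendsto (fun i => s (u i) - u i) l (𝓝 0)) : s a = a :=
  ndp.tendsto_sigma_unique (ndp.tendsto_sigma_map hst hu)
    (by simpa using ndp.tendsto_sigma_add hu (ndp.tendsto_sigma_of_tendsto hs))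

theorem continuous_sigma_p_apply (y : Y) :
    @Continuous X ℝ ndp.sigma _ fun x => ndp.p x y :=
  @Continuous.comp X (Y → ℝ) ℝ ndp.sigma _ _ _ _ (continuous_apply y) continuous_induced_dom

theorem isClosed_sigma_p_eq (y : Y) (c : ℝ) : @IsClosed X ndp.sigma {x | ndp.p x y = c} :=
  @IsClosed.preimage X ℝ ndp.sigma _ _ (ndp.continuous_sigma_p_apply y) _ isClosed_singleton

theorem eq_of_mem_closure_convexHull {O : Set X} {x z : X} (hO : O ⊆ {x})
    (hz : z ∈ @closure X ndp.sigma (convexHull ℝ O)) : z = x := by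
  refine ndp.ext fun y => ?_
  have hsub : convexHull ℝ O ⊆ {w | ndp.p w y = ndp.p x y} := by
    refine (convexHull_mono hO).trans ?_
    rw [convexHull_singleton]
    rintro w rfl
    rfl
  exact @closure_minimal X ndp.sigma _ _ hsub (ndp.isClosed_sigma_p_eq y _) _ hz

theorem p_eq_zero_of_mem_closure_span {R : Set X} {y : Y} (hR : ∀ r ∈ R, ndp.p r y = 0) {x : X}
    (hx : x ∈ @closure X ndp.sigma (Submodule.span ℝ R : Set X)) : ndp.p x y = 0 := by
  have hspan : Submodule.span ℝ R ≤ LinearMap.ker (ndp.p.flip y) :=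
    (Submodule.span_le).mpr hR
  exact @closure_minimal X ndp.sigma _ _ hspan (ndp.isClosed_sigma_p_eq y 0) _ hx

theorem opNorm_le_of_adjoint {T : X →L[ℝ] X} {T' : Y →L[ℝ] Y}
    (hT : ∀ x y, ndp.p (T x) y = ndp.p x (T' y)) : ‖T'‖ ≤ ‖T‖ := by
  refine T'.opNorm_le_bound (norm_nonneg T) fun y =>
    ndp.flip.norm_le_of_forall_abs_le fun x hx => ?_
  calc |ndp.p x (T' y)| = |ndp.p (T x) y| := by rw [hT]
    _ ≤ ‖T x‖ * ‖y‖ := ndp.abs_p_le _ _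
    _ ≤ ‖T‖ * ‖y‖ := by gcongr; simpa using T.le_of_opNorm_le_of_le le_rfl hx

theorem exists_clm_tendsto [l.NeBot] {F : κ → X →L[ℝ] X} (hF : ∃ M, ∀ i, ‖F i‖ ≤ M)
    (h : ∀ x, ∃ a, Tendsto (fun i => F i x) l (@nhds X ndp.sigma a)) :
    ∃ P : X →L[ℝ] X, ∀ x, Tendsto (fun i => F i x) l (@nhds X ndp.sigma (P x)) := by
  choose f hf using h
  obtain ⟨M, hM⟩ := hF
  have hadd (x z : X) : f (x + z) = f x + f z :=
    ndp.tendsto_sigma_unique (hf (x + z)) (by simpa using ndp.tendsto_sigma_add (hf x) (hf z))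
  have hsmul (c : ℝ) (x : X) : f (c • x) = c • f x :=
    ndp.tendsto_sigma_unique (hf (c • x)) (by simpa using ndp.tendsto_sigma_const_smul c (hf x))
  have hbound (x : X) : ‖f x‖ ≤ M * ‖x‖ := by
    refine ndp.norm_le_of_forall_abs_le fun y hy =>
      le_of_tendsto ((ndp.tendsto_sigma_iff.mp (hf x) y).abs) (Eventually.of_forall fun i => ?_)
    calc |ndp.p (F i x) y| ≤ ‖F i x‖ * ‖y‖ := ndp.abs_p_le _ _
      _ ≤ ‖F i x‖ := mul_le_of_le_one_right (norm_nonneg _) hy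
      _ ≤ M * ‖x‖ := (F i).le_of_opNorm_le (hM i) x
  exact ⟨LinearMap.mkContinuous ⟨⟨f, hadd⟩, hsmul⟩ M hbound, hf⟩

end NormingDualPair

namespace AverageScheme

variable {ι : Type*} [Preorder ι] {ndp : NormingDualPair X Y} (AS : AverageScheme ndp ι)

theorem normBound' : ∃ M : ℝ, ∀ α : ι, ‖AS.A' α‖ ≤ M :=
  AS.normBound.imp fun _ hM α => (ndp.opNorm_le_of_adjoint (AS.A'_spec α)).trans (hM α)

theorem A_apply_of_mem_fixedSpace {x : X} (hx : x ∈ fixedSpace AS.S) (α : ι) : AS.A α x = x :=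
  ndp.eq_of_mem_closure_convexHull (by rintro _ ⟨s, hs, rfl⟩; exact hx s hs) (AS.as2 α x)

theorem A'_apply_of_mem_fix' {y : Y} (hy : y ∈ AS.fix') (α : ι) : AS.A' α y = y :=
  ndp.flip.eq_of_mem_closure_convexHull (by rintro _ ⟨s, hs, rfl⟩; exact hy s hs) (AS.as2' α y)

variable [Nonempty ι] [IsDirected ι (· ≤ ·)] {P : X → X} {P' : Y → Y}

theorem apply_mem_fixedSpace_of_tendsto
    (hP : ∀ x, Tendsto (fun α => AS.A α x) atTop (@nhds X ndp.sigma (P x))) (x : X) :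
    P x ∈ fixedSpace AS.S := fun s hs =>
  ndp.apply_eq_of_tendsto_sub (AS.adj_spec s hs) (hP x) (AS.as3_right s hs x)

theorem apply_mem_fix'_of_tendsto
    (hP' : ∀ y, Tendsto (fun α => AS.A' α y) atTop (@nhds Y ndp.sigma' (P' y))) (y : Y) :
    P' y ∈ AS.fix' := fun s hs =>
  ndp.flip.apply_eq_of_tendsto_sub (t := s) (fun y x => by simp [AS.adj_spec s hs]) (hP' y)
    (AS.as3'_right s hs y)

theorem apply_eq_self_of_tendsto
    (hP : ∀ x, Tendsto (fun α => AS.A α x) atTop (@nhds X ndp.sigma (P x))) {x : X}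
    (hx : x ∈ fixedSpace AS.S) : P x = x :=
  ndp.tendsto_sigma_unique (hP x) <| ndp.tendsto_sigma_iff.mpr fun y => by
    simpa only [AS.A_apply_of_mem_fixedSpace hx] using tendsto_const_nhds

theorem apply_eq_self_of_tendsto'
    (hP' : ∀ y, Tendsto (fun α => AS.A' α y) atTop (@nhds Y ndp.sigma' (P' y))) {y : Y}
    (hy : y ∈ AS.fix') : P' y = y :=
  ndp.flip.tendsto_sigma_unique (hP' y) <| ndp.flip.tendsto_sigma_iff.mpr fun x => by
    simpa only [AS.A'_apply_of_mem_fix' hy] using tendsto_const_nhds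

theorem p_apply_eq_of_tendsto
    (hP : ∀ x, Tendsto (fun α => AS.A α x) atTop (@nhds X ndp.sigma (P x)))
    (hP' : ∀ y, Tendsto (fun α => AS.A' α y) atTop (@nhds Y ndp.sigma' (P' y))) (x : X) (y : Y) :
    ndp.p (P x) y = ndp.p x (P' y) :=
  tendsto_nhds_unique (ndp.tendsto_sigma_iff.mp (hP x) y) <| by
    simpa only [NormingDualPair.flip_p_apply, ← AS.A'_spec] using
      ndp.flip.tendsto_sigma_iff.mp (hP' y) x

theorem apply_eq_zero_of_tendsto
    (hP : ∀ x, Tendsto (fun α => AS.A α x) atTop (@nhds X ndp.sigma (P x)))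
    (hP' : ∀ y, Tendsto (fun α => AS.A' α y) atTop (@nhds Y ndp.sigma' (P' y))) {x : X}
    (hx : x ∈ @closure X ndp.sigma (Submodule.span ℝ (rangeIminus AS.S) : Set X)) : P x = 0 :=
  ndp.ext fun y => by
    rw [AS.p_apply_eq_of_tendsto hP hP', map_zero, LinearMap.zero_apply]
    refine ndp.p_eq_zero_of_mem_closure_span ?_ hx
    rintro _ ⟨z, s, hs, rfl⟩
    rw [map_sub, LinearMap.sub_apply, AS.adj_spec s hs, AS.apply_mem_fix'_of_tendsto hP' y s hs,
      sub_self]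

theorem apply_eq_zero_of_tendsto'
    (hP : ∀ x, Tendsto (fun α => AS.A α x) atTop (@nhds X ndp.sigma (P x)))
    (hP' : ∀ y, Tendsto (fun α => AS.A' α y) atTop (@nhds Y ndp.sigma' (P' y))) {y : Y}
    (hy : y ∈ @closure Y ndp.sigma' (Submodule.span ℝ AS.rg' : Set Y)) : P' y = 0 :=
  ndp.flip.ext fun x => by
    rw [NormingDualPair.flip_p_apply, ← AS.p_apply_eq_of_tendsto hP hP', map_zero]
    refine ndp.flip.p_eq_zero_of_mem_closure_span ?_ hy
    rintro _ ⟨w, s, hs, rfl⟩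
    simp [← AS.adj_spec s hs, AS.apply_mem_fixedSpace_of_tendsto hP x s hs]

theorem apply_map_eq_of_tendsto
    (hP : ∀ x, Tendsto (fun α => AS.A α x) atTop (@nhds X ndp.sigma (P x)))
    (hP' : ∀ y, Tendsto (fun α => AS.A' α y) atTop (@nhds Y ndp.sigma' (P' y)))
    {s : X →L[ℝ] X} (hs : s ∈ AS.S) (x : X) : P (s x) = P x :=
  ndp.ext fun y => by
    rw [AS.p_apply_eq_of_tendsto hP hP', AS.p_apply_eq_of_tendsto hP hP', AS.adj_spec s hs,
      AS.apply_mem_fix'_of_tendsto hP' y s hs]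

end AverageScheme

theorem stmt10 {ι : Type*} [Preorder ι] [Nonempty ι] [IsDirected ι (· ≤ ·)]
    (ndp : NormingDualPair X Y) (AS : AverageScheme ndp ι)
    (h : AS.WeaklyErgodic) :
    ∃ (P : X →L[ℝ] X) (P' : Y →L[ℝ] Y),
      (∀ x : X, Tendsto (fun α : ι => AS.A α x) atTop (@nhds X ndp.sigma (P x))) ∧
      (∀ y : Y, Tendsto (fun α : ι => AS.A' α y) atTop (@nhds Y ndp.sigma' (P' y))) ∧
      (∀ (x : X) (y : Y), ndp.p (P x) y = ndp.p x (P' y)) ∧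
      (∀ x : X, P x ∈ fixedSpace AS.S) ∧
      (∀ x ∈ fixedSpace AS.S, P x = x) ∧
      (∀ x ∈ @closure X ndp.sigma (Submodule.span ℝ (rangeIminus AS.S) : Set X), P x = 0) ∧
      (∀ y : Y, P' y ∈ AS.fix') ∧
      (∀ y ∈ AS.fix', P' y = y) ∧
      (∀ y ∈ @closure Y ndp.sigma' (Submodule.span ℝ AS.rg' : Set Y), P' y = 0) ∧
      (∀ s ∈ AS.S, ∀ x : X, P (s x) = P x ∧ s (P x) = P x) := by
  obtain ⟨P, hP⟩ := ndp.exists_clm_tendsto AS.normBound h.1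
  obtain ⟨P', hP'⟩ := ndp.flip.exists_clm_tendsto AS.normBound' h.2
  exact ⟨P, P', hP, hP', AS.p_apply_eq_of_tendsto hP hP', AS.apply_mem_fixedSpace_of_tendsto hP,
    fun _ => AS.apply_eq_self_of_tendsto hP, fun _ => AS.apply_eq_zero_of_tendsto hP hP',
    AS.apply_mem_fix'_of_tendsto hP', fun _ => AS.apply_eq_self_of_tendsto' hP',
    fun _ => AS.apply_eq_zero_of_tendsto' hP hP',
    fun s hs x =>
      ⟨AS.apply_map_eq_of_tendsto hP hP' hs x, AS.apply_mem_fixedSpace_of_tendsto hP x s hs⟩⟩
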